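/- Define the sequence a_l = (l!)^{1 + n/(n−1)} 2^l λ^{l/(n−1)} / (2l)! for integer n ≥ 2 and λ = (n−1)^{n−1}/(n/2)^n (λ = 1 for n = 2). Then a_{l+1}/a_l = λ^{1/(n−1)} (l+1)^{n/(n−1)} / (2l+1) ≥ 1 for all integers l ≥ 1; i.e., (a_l) is nondecreasing. -/

import Mathlib

open Real

/-- `λ(n) = (n−1)^{n−1}/(n/2)^n` for `n > 2`, and `λ = 1` for `n = 2`. -/
noncomputable def lamConst (n : ℕ) : ℝ :=
  if n ≤ 2 then 1 else ((n : ℝ) - 1) ^ (n - 1) / ((n : ℝ) / 2) ^ n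

/-- `a_l = (l!)^{1 + n/(n−1)} 2^l λ^{l/(n−1)} / (2l)!`. -/
noncomputable def coeffA (n : ℕ) (l : ℕ) : ℝ :=
  (l.factorial : ℝ) ^ ((1 : ℝ) + (n : ℝ) / ((n : ℝ) - 1)) * 2 ^ l *
    lamConst n ^ ((l : ℝ) / ((n : ℝ) - 1)) / ((2 * l).factorial : ℝ)

/-!
With `p = n / (n - 1)` one has `λ ^ (1 / (n - 1)) = (n - 1) / (n / 2) ^ p` (the case `n = 2`
included), so with `x = (l + 1) / (n / 2)` the inequality `a_{l+1} / a_l ≥ 1` becomes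
`n * x - 1 ≤ (n - 1) * x ^ p`. This is Bernoulli's inequality `x ^ p ≥ 1 + p * (x - 1)` multiplied
by `n - 1`, because `(n - 1) * p = n`.
-/

theorem mul_sub_one_le_sub_one_mul_rpow {q x : ℝ} (hq : 1 < q) (hx : 0 ≤ x) :
    q * x - 1 ≤ (q - 1) * x ^ (q / (q - 1)) := by
  have hq1 : 0 < q - 1 := sub_pos.mpr hq
  have hp : 1 ≤ q / (q - 1) := by rw [one_le_div hq1]; linarith
  have bernoulli := one_add_mul_self_le_rpow_one_add (s := x - 1) (by linarith) hp
  rw [add_sub_cancel] at bernoulli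
  calc q * x - 1 = (q - 1) * (1 + q / (q - 1) * (x - 1)) := by field_simp; ring
    _ ≤ (q - 1) * x ^ (q / (q - 1)) := by gcongr

theorem lamConst_pos (n : ℕ) : 0 < lamConst n := by
  unfold lamConst
  split_ifs with hn
  · exact one_pos
  · have : (2 : ℝ) < n := by exact_mod_cast not_le.mp hn
    have : (0 : ℝ) < n - 1 := by linarith
    positivity

theorem lamConst_eq_rpow {n : ℕ} (hn : 2 ≤ n) :
    lamConst n = ((n : ℝ) - 1) ^ ((n : ℝ) - 1) / ((n : ℝ) / 2) ^ (n : ℝ) := by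
  unfold lamConst
  split_ifs with h
  · obtain rfl : n = 2 := by omega
    norm_num
  · rw [← rpow_natCast, ← rpow_natCast, Nat.cast_sub (by omega), Nat.cast_one]

theorem lamConst_rpow_inv {n : ℕ} (hn : 2 ≤ n) :
    lamConst n ^ ((1 : ℝ) / ((n : ℝ) - 1)) =
      ((n : ℝ) - 1) / ((n : ℝ) / 2) ^ ((n : ℝ) / ((n : ℝ) - 1)) := by
  have hn' : (2 : ℝ) ≤ n := by exact_mod_cast hn
  have hn1 : (0 : ℝ) < n - 1 := by linarith
  rw [lamConst_eq_rpow hn, div_rpow (by positivity) (by positivity), ← rpow_mul hn1.le,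
    ← rpow_mul (by positivity), mul_one_div_cancel hn1.ne', rpow_one, mul_one_div]

theorem two_mul_add_one_le_lamConst_rpow_mul {n : ℕ} (hn : 2 ≤ n) {t : ℝ} (ht : -1 ≤ t) :
    2 * t + 1 ≤
      lamConst n ^ ((1 : ℝ) / ((n : ℝ) - 1)) * (t + 1) ^ ((n : ℝ) / ((n : ℝ) - 1)) := by
  have hn' : (2 : ℝ) ≤ n := by exact_mod_cast hn
  have key := mul_sub_one_le_sub_one_mul_rpow (q := n) (x := (t + 1) / (n / 2))
    (by linarith) (div_nonneg (by linarith) (by linarith))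
  rw [div_rpow (by linarith) (by linarith)] at key
  rw [lamConst_rpow_inv hn]
  calc 2 * t + 1 = n * ((t + 1) / (n / 2)) - 1 := by field_simp; ring
    _ ≤ _ := key
    _ = _ := by ring

theorem coeffA_pos (n l : ℕ) : 0 < coeffA n l := by
  have := lamConst_pos n
  unfold coeffA
  positivity

theorem coeffA_succ_div (n l : ℕ) :
    coeffA n (l + 1) / coeffA n l =
      lamConst n ^ ((1 : ℝ) / ((n : ℝ) - 1)) *
        ((l : ℝ) + 1) ^ ((n : ℝ) / ((n : ℝ) - 1)) / (2 * (l : ℝ) + 1) := by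
  have hfact : ((l + 1).factorial : ℝ) = (l + 1) * l.factorial := by
    push_cast [Nat.factorial_succ]; ring
  have hfact2 : ((2 * (l + 1)).factorial : ℝ) = (2 * l + 2) * (2 * l + 1) * (2 * l).factorial := by
    rw [show 2 * (l + 1) = 2 * l + 1 + 1 by ring, Nat.factorial_succ, Nat.factorial_succ]
    push_cast; ring
  have hlam : lamConst n ^ (((l + 1 : ℕ) : ℝ) / ((n : ℝ) - 1)) =
      lamConst n ^ ((l : ℝ) / ((n : ℝ) - 1)) * lamConst n ^ ((1 : ℝ) / ((n : ℝ) - 1)) := by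
    rw [← rpow_add (lamConst_pos n)]; push_cast; ring_nf
  rw [div_eq_iff (coeffA_pos n l).ne']
  unfold coeffA
  rw [hfact, hfact2, hlam, mul_rpow (by positivity) (by positivity), rpow_add (by positivity),
    rpow_one, pow_succ]
  field_simp

theorem coeffA_ratio_ge_one_general (n : ℕ) (hn : 2 ≤ n) (l : ℕ) :
    coeffA n (l + 1) / coeffA n l =
      lamConst n ^ ((1 : ℝ) / ((n : ℝ) - 1)) *
        ((l : ℝ) + 1) ^ ((n : ℝ) / ((n : ℝ) - 1)) / (2 * (l : ℝ) + 1) ∧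
    1 ≤ coeffA n (l + 1) / coeffA n l ∧ coeffA n l ≤ coeffA n (l + 1) := by
  have hratio := coeffA_succ_div n l
  have hone : 1 ≤ coeffA n (l + 1) / coeffA n l := by
    rw [hratio, one_le_div (by positivity)]
    exact two_mul_add_one_le_lamConst_rpow_mul hn (by linarith [l.cast_nonneg (α := ℝ)])
  exact ⟨hratio, hone, (one_le_div (coeffA_pos n l)).mp hone⟩

theorem coeffA_ratio_ge_one (n : ℕ) (hn : 2 ≤ n) (l : ℕ) (hl : 1 ≤ l) :
    coeffA n (l + 1) / coeffA n l =
      lamConst n ^ ((1 : ℝ) / ((n : ℝ) - 1)) *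
        ((l : ℝ) + 1) ^ ((n : ℝ) / ((n : ℝ) - 1)) / (2 * (l : ℝ) + 1) ∧
    1 ≤ coeffA n (l + 1) / coeffA n l ∧ coeffA n l ≤ coeffA n (l + 1) :=
  coeffA_ratio_ge_one_general n hn l
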